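/- For every E ∈ ℝ there exist constants C_E > 0, η₀(E) > 0 and K₀(E) > 0 with the following property: for every 0 < η ≤ η₀(E) and every K ≥ K₀(E), there exist functions l₁, l₂, l₃, l₄, l₅ : ℝ → ℝ, each Lipschitz with constant C_E/η² and each either convex on ℝ or concave on ℝ, such that log_η^K(x² − E) = l₁(x) + l₂(x) + l₃(x) + l₄(x) + l₅(x) for all x ∈ ℝ. -/

import Mathlib

open Real

/-- The regularized logarithm `log_η(y) = (1/2) log(y² + η²) = log|y + iη|`. -/
noncomputable def logEta (η y : ℝ) : ℝ := (1 / 2) * Real.log (y ^ 2 + η ^ 2)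

/-- The regularized and truncated logarithm `log_η^K(y) = min(log_η(y), log_η(K))`. -/
noncomputable def logEtaK (η K y : ℝ) : ℝ := min (logEta η y) (logEta η K)

set_option maxHeartbeats 1000000


lemma aux_u (E η x : ℝ) :
    HasDerivAt (fun x : ℝ => (x^2 - E)^2 + η^2) (4*x^3 - 4*E*x) x := by
  have h1 : HasDerivAt (fun x : ℝ => x^2 - E) (2*x) x := by
    simpa using (hasDerivAt_pow 2 x).sub_const E
  have h2 := (h1.pow 2).add_const (η^2)
  refine h2.congr_deriv ?_
  simp; ring

lemma aux_h (E η : ℝ) (hη : 0 < η) (x : ℝ) :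
    HasDerivAt (fun x : ℝ => (1/2) * Real.log ((x^2 - E)^2 + η^2))
      ((2*x^3 - 2*E*x) / ((x^2 - E)^2 + η^2)) x := by
  have hu : (0:ℝ) < (x^2 - E)^2 + η^2 := by positivity
  have h2 := ((aux_u E η x).log hu.ne').const_mul (1/2 : ℝ)
  refine h2.congr_deriv ?_
  field_simp
  ring

lemma aux_h1 (E η : ℝ) (hη : 0 < η) (x : ℝ) :
    HasDerivAt (fun x : ℝ => (2*x^3 - 2*E*x) / ((x^2 - E)^2 + η^2))
      (((6*x^2 - 2*E) * ((x^2 - E)^2 + η^2) - (2*x^3 - 2*E*x) * (4*x^3 - 4*E*x))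
        / ((x^2 - E)^2 + η^2)^2) x := by
  have hu : (0:ℝ) < (x^2 - E)^2 + η^2 := by positivity
  have hp : HasDerivAt (fun x : ℝ => 2*x^3 - 2*E*x) (6*x^2 - 2*E) x := by
    have h1 := (hasDerivAt_pow 3 x).const_mul (2:ℝ)
    have h2 := (hasDerivAt_id x).const_mul (2*E)
    refine (h1.sub h2).congr_deriv ?_
    simp; ring
  exact hp.div (aux_u E η x) hu.ne'

lemma aux_A (s R : ℝ) (hR : 0 < R) (x : ℝ) :
    HasDerivAt (fun x : ℝ => s * (x * arctan (x/R) - (R/2) * Real.log (x^2 + R^2)))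
      (s * arctan (x/R)) x := by
  have hxR : HasDerivAt (fun x : ℝ => x / R) (1/R) x := by
    simpa using (hasDerivAt_id x).div_const R
  have ha : HasDerivAt (fun x : ℝ => arctan (x/R)) (1/(1+(x/R)^2) * (1/R)) x :=
    (Real.hasDerivAt_arctan (x/R)).comp (h₂ := Real.arctan) x hxR
  have hm : HasDerivAt (fun x : ℝ => x * arctan (x/R))
      (1 * arctan (x/R) + x * (1/(1+(x/R)^2) * (1/R))) x :=
    (hasDerivAt_id' x).mul ha
  have hu : (0:ℝ) < x^2 + R^2 := by positivity
  have hl : HasDerivAt (fun x : ℝ => (R/2) * Real.log (x^2 + R^2))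
      ((R/2) * ((2*x) / (x^2 + R^2))) x := by
    have h1 : HasDerivAt (fun x : ℝ => x^2 + R^2) (2*x) x := by
      simpa using (hasDerivAt_pow 2 x).add_const (R^2)
    exact (h1.log hu.ne').const_mul _
  have := (hm.sub hl).const_mul s
  refine this.congr_deriv ?_
  have h1 : 1 + (x/R)^2 ≠ 0 := by positivity
  field_simp
  ring

lemma aux_A1 (s R : ℝ) (hR : 0 < R) (x : ℝ) :
    HasDerivAt (fun x : ℝ => s * arctan (x/R)) (s * R / (x^2 + R^2)) x := by
  have hxR : HasDerivAt (fun x : ℝ => x / R) (1/R) x := by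
    simpa using (hasDerivAt_id x).div_const R
  have ha := ((Real.hasDerivAt_arctan (x/R)).comp (h₂ := Real.arctan) x hxR).const_mul s
  refine ha.congr_deriv ?_
  have h1 : 1 + (x/R)^2 ≠ 0 := by positivity
  field_simp
  ring


-- |h'| bound
lemma h1_bound (E η R x : ℝ) (hη : 0 < η) (hη1 : η ≤ 1) (hR : R = |E| + 2) :
    |(2*x^3 - 2*E*x) / ((x^2 - E)^2 + η^2)| ≤ (R + 4) / η^2 := by
  have hu : (0:ℝ) < (x^2 - E)^2 + η^2 := by positivity
  rw [abs_div, abs_of_pos hu, div_le_div_iff₀ hu (by positivity)]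
  have hE1 : E ≤ R - 2 := by rw [hR]; have := le_abs_self E; linarith
  have hE2 : -E ≤ R - 2 := by rw [hR]; have := neg_abs_le E; linarith
  have hR2 : (2:ℝ) ≤ R := by rw [hR]; have := abs_nonneg E; linarith
  have habs : |2*x^3 - 2*E*x| = 2 * |x| * |x^2 - E| := by
    rw [show 2*x^3 - 2*E*x = (2*x) * (x^2 - E) by ring, abs_mul, abs_mul]
    simp [abs_of_nonneg]
  rw [habs]
  set a := |x| with ha_def
  set b := |x^2 - E| with hb_def
  have ha : 0 ≤ a := abs_nonneg _
  have hb : 0 ≤ b := abs_nonneg _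
  have ha2 : a^2 = x^2 := sq_abs x
  have hb2 : b^2 = (x^2 - E)^2 := sq_abs _
  rw [← hb2]
  rcases le_or_gt a R with hc | hc
  · nlinarith [sq_nonneg (b - η), mul_nonneg ha hη.le, mul_nonneg hb hη.le,
      mul_nonneg (mul_nonneg ha hb) hη.le, sq_nonneg (a*η - b)]
  · have hx2 : R^2 ≤ a^2 := by nlinarith
    have hy : x^2 - E ≥ a^2 / 2 := by nlinarith
    have hbb : b = x^2 - E := abs_of_pos (by nlinarith)
    have hba : a ≤ b := by rw [hbb]; nlinarith
    nlinarith [mul_le_mul_of_nonneg_right hba (by positivity : (0:ℝ) ≤ 2*b*η^2),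
      mul_le_mul_of_nonneg_left (show η^2 ≤ 1 by nlinarith) (by positivity : (0:ℝ) ≤ 2*b^2),
      sq_nonneg η, sq_nonneg b]

-- core: h'' ≤ A''
lemma core_ineq (E η R x : ℝ) (hη : 0 < η) (hη1 : η ≤ 1) (hR : R = |E| + 2) :
    ((6*x^2 - 2*E) * ((x^2 - E)^2 + η^2) - (2*x^3 - 2*E*x) * (4*x^3 - 4*E*x))
        / ((x^2 - E)^2 + η^2)^2
      ≤ ((8*R^3 + 2*R + 40) / η^2) * R / (x^2 + R^2) := by
  have hu : (0:ℝ) < (x^2 - E)^2 + η^2 := by positivity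
  have hR0 : (0:ℝ) < R := by rw [hR]; positivity
  have hxr : (0:ℝ) < x^2 + R^2 := by positivity
  rw [div_le_div_iff₀ (by positivity) hxr, div_mul_eq_mul_div, div_mul_eq_mul_div,
    le_div_iff₀ (by positivity : (0:ℝ) < η^2)]
  have hE1 : E ≤ R - 2 := by rw [hR]; have := le_abs_self E; linarith
  have hE2 : -E ≤ R - 2 := by rw [hR]; have := neg_abs_le E; linarith
  have hR2 : (2:ℝ) ≤ R := by rw [hR]; have := abs_nonneg E; linarith
  set y := x^2 - E with hy_def
  set u := y^2 + η^2 with hu_def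
  have hN : (6*x^2 - 2*E) * u - (2*x^3 - 2*E*x) * (4*x^3 - 4*E*x)
      = (2*y + 4*x^2) * u - 8*x^2*y^2 := by rw [hy_def, hu_def]; ring
  rw [hN]
  rcases le_or_gt (x^2) (R^2) with hc | hc
  · -- small x
    set b := |y| with hbdef
    have hb : 0 ≤ b := abs_nonneg _
    have hb2 : b^2 = y^2 := sq_abs _
    have hyb : y ≤ b := le_abs_self _
    have hNle : (2*y + 4*x^2) * u - 8*x^2*y^2 ≤ (2*b + 4*x^2) * u := by
      nlinarith [mul_nonneg (sq_nonneg x) (sq_nonneg y), hu.le]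
    have h1' : 2*b*η ≤ u := by
      rw [hu_def, ← hb2]; nlinarith [sq_nonneg (b - η)]
    have h2 : η^2 ≤ u := by rw [hu_def, ← hb2]; nlinarith
    have hmain : (2*b + 4*x^2) * ((x^2 + R^2) * η^2) ≤ (8*R^3 + 2*R + 40) * R * u := by
      have e1 : 2*b + 4*x^2 ≤ 2*b + 4*R^2 := by nlinarith
      have e2 : (x^2 + R^2) * η^2 ≤ 2*R^2*η^2 := by nlinarith [sq_nonneg η]
      have e3 := mul_le_mul e1 e2 (by positivity) (by positivity)
      have e4 : (2*b + 4*R^2) * (2*R^2*η^2) = 2*R^2*η*(2*b*η) + 8*R^4*η^2 := by ring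
      have e5 := mul_le_mul_of_nonneg_left h1' (by positivity : (0:ℝ) ≤ 2*R^2*η)
      have e6 : 2*R^2*η*u ≤ 2*R^2*u := by
        calc 2*R^2*η*u = 2*R^2*(η*u) := by ring
          _ ≤ 2*R^2*(1*u) := by
              exact mul_le_mul_of_nonneg_left (mul_le_mul_of_nonneg_right hη1 hu.le)
                (by positivity)
          _ = 2*R^2*u := by ring
      have e7 := mul_le_mul_of_nonneg_left h2 (by positivity : (0:ℝ) ≤ 8*R^4)
      have e8 : (0:ℝ) ≤ 40*(R*u) := by positivity
      have e9 : (8*R^3 + 2*R + 40) * R * u = 8*(R^4*u) + 2*(R^2*u) + 40*(R*u) := by ring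
      have e10 : 2*R^2*η*u = 2*(R^2*(η*u)) := by ring
      linarith [e3, e4, e5, e6, e7, e8, e9]
    calc ((2*y + 4*x^2) * u - 8*x^2*y^2) * (x^2 + R^2) * η^2
        ≤ ((2*b + 4*x^2) * u) * (x^2 + R^2) * η^2 := by
          have := mul_le_mul_of_nonneg_right
            (mul_le_mul_of_nonneg_right hNle hxr.le) (by positivity : (0:ℝ) ≤ η^2)
          linarith
      _ = ((2*b + 4*x^2) * ((x^2 + R^2) * η^2)) * u := by ring
      _ ≤ ((8*R^3 + 2*R + 40) * R * u) * u := mul_le_mul_of_nonneg_right hmain hu.le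
      _ = (8*R^3 + 2*R + 40) * R * u^2 := by ring
  · -- big x
    have hy1 : x^2 / 2 ≤ y := by rw [hy_def]; nlinarith
    have hy0 : 0 < y := by nlinarith
    have h4y : x^2 + R^2 ≤ 4*y := by nlinarith
    have h8y : 4*x^2 ≤ 8*y := by nlinarith
    have hy2u : y^2 ≤ u := by rw [hu_def]; nlinarith
    have hNle : (2*y + 4*x^2) * u - 8*x^2*y^2 ≤ 10*y*u := by
      nlinarith [mul_nonneg (sq_nonneg x) (sq_nonneg y), hu.le,
        mul_le_mul_of_nonneg_right h8y hu.le]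
    have s1 := mul_le_mul_of_nonneg_right hNle hxr.le
    have s2 := mul_le_mul_of_nonneg_left h4y (by positivity : (0:ℝ) ≤ 10*y*u)
    have s3 : ((2*y + 4*x^2) * u - 8*x^2*y^2) * (x^2 + R^2) ≤ 40*(u*u) := by
      have e : 10*y*u*(4*y) = 40*(y^2*u) := by ring
      have e2 : 40*(y^2*u) ≤ 40*(u*u) := by
        nlinarith [mul_le_mul_of_nonneg_right hy2u hu.le]
      linarith
    have hfin : 40*(u*u) ≤ (8*R^3 + 2*R + 40) * R * u^2 := by
      have h0 : (0:ℝ) ≤ (8*R^3 + 2*R + 40) * R - 40 := by nlinarith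
      nlinarith [mul_nonneg h0 (mul_nonneg hu.le hu.le)]
    rcases le_or_gt (((2*y + 4*x^2) * u - 8*x^2*y^2) * (x^2 + R^2)) 0 with h | h
    · have : ((2*y + 4*x^2) * u - 8*x^2*y^2) * (x^2 + R^2) * η^2 ≤ 0 :=
        mul_nonpos_of_nonpos_of_nonneg h (sq_nonneg η)
      nlinarith [mul_pos hu hu]
    · have e1 : ((2*y + 4*x^2) * u - 8*x^2*y^2) * (x^2 + R^2) * η^2
          ≤ ((2*y + 4*x^2) * u - 8*x^2*y^2) * (x^2 + R^2) * 1 := by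
        apply mul_le_mul_of_nonneg_left _ h.le
        nlinarith
      calc ((2*y + 4*x^2) * u - 8*x^2*y^2) * (x^2 + R^2) * η^2
          ≤ ((2*y + 4*x^2) * u - 8*x^2*y^2) * (x^2 + R^2) * 1 := e1
        _ = ((2*y + 4*x^2) * u - 8*x^2*y^2) * (x^2 + R^2) := by ring
        _ ≤ 40*(u*u) := s3
        _ ≤ (8*R^3 + 2*R + 40) * R * u^2 := hfin


private lemma lipschitz_of_deriv_bound' {f f' : ℝ → ℝ} {c : ℝ}
    (hd : ∀ x, HasDerivAt f (f' x) x) (hb : ∀ x, |f' x| ≤ c) :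
    LipschitzWith (Real.toNNReal c) f := by
  have hc : 0 ≤ c := le_trans (abs_nonneg _) (hb 0)
  refine lipschitzWith_of_nnnorm_deriv_le (fun x => (hd x).differentiableAt) fun x => ?_
  rw [(hd x).deriv, ← NNReal.coe_le_coe, coe_nnnorm, Real.coe_toNNReal _ hc, Real.norm_eq_abs]
  exact hb x

/-- For every `E ∈ ℝ` there exist `C_E, η₀(E), K₀(E) > 0` such that for all `0 < η ≤ η₀(E)`
and `K ≥ K₀(E)`, the function `x ↦ log_η^K(x² − E)` can be written as the sum of five
functions, each `C_E/η²`-Lipschitz and each either convex or concave on `ℝ`. -/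
theorem logEtaK_sq_decomposition (E : ℝ) :
    ∃ C η₀ K₀ : ℝ, 0 < C ∧ 0 < η₀ ∧ 0 < K₀ ∧
      ∀ η K : ℝ, 0 < η → η ≤ η₀ → K₀ ≤ K →
        ∃ l : Fin 5 → ℝ → ℝ,
          (∀ i, LipschitzWith (Real.toNNReal (C / η ^ 2)) (l i)) ∧
          (∀ i, ConvexOn ℝ Set.univ (l i) ∨ ConcaveOn ℝ Set.univ (l i)) ∧
          (∀ x : ℝ, logEtaK η K (x ^ 2 - E) = ∑ i : Fin 5, l i x) := by
  set R : ℝ := |E| + 2 with hR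
  have hR0 : (0:ℝ) < R := by positivity
  have hR2 : (2:ℝ) ≤ R := by rw [hR]; have := abs_nonneg E; linarith
  set S : ℝ := 8*R^3 + 2*R + 40 with hS
  have hS0 : (0:ℝ) < S := by positivity
  refine ⟨2*S + R + 4, 1, 1, by positivity, one_pos, one_pos, ?_⟩
  intro η K hη hη1 _hK
  have hη2 : (0:ℝ) < η^2 := by positivity
  set s : ℝ := S / η^2 with hs
  have hs0 : (0:ℝ) ≤ s := by positivity
  set c : ℝ := logEta η K with hc
  set A : ℝ → ℝ := fun x => s * (x * arctan (x/R) - (R/2) * Real.log (x^2 + R^2)) with hA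
  set h : ℝ → ℝ := fun x => (1/2) * Real.log ((x^2 - E)^2 + η^2) with hh
  set B : ℝ → ℝ := fun x => h x - A x with hB
  -- derivative facts
  have dA : ∀ x, HasDerivAt A (s * arctan (x/R)) x := fun x => aux_A s R hR0 x
  have dA1 : ∀ x, HasDerivAt (fun x => s * arctan (x/R)) (s * R / (x^2 + R^2)) x :=
    fun x => aux_A1 s R hR0 x
  have dh : ∀ x, HasDerivAt h ((2*x^3 - 2*E*x) / ((x^2 - E)^2 + η^2)) x :=
    fun x => aux_h E η hη x
  have dh1 : ∀ x, HasDerivAt (fun x => (2*x^3 - 2*E*x) / ((x^2 - E)^2 + η^2))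
      (((6*x^2 - 2*E) * ((x^2 - E)^2 + η^2) - (2*x^3 - 2*E*x) * (4*x^3 - 4*E*x))
        / ((x^2 - E)^2 + η^2)^2) x := fun x => aux_h1 E η hη x
  have dB : ∀ x, HasDerivAt B ((2*x^3 - 2*E*x) / ((x^2 - E)^2 + η^2) - s * arctan (x/R)) x :=
    fun x => (dh x).sub (dA x)
  -- bounds on derivatives
  have arct : ∀ x, |arctan (x/R)| ≤ 2 := by
    intro x
    have h1 := Real.arctan_lt_pi_div_two (x/R)
    have h2 := Real.neg_pi_div_two_lt_arctan (x/R)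
    have hpi := Real.pi_le_four
    rw [abs_le]; constructor <;> nlinarith
  have bndA2 : ∀ x, |s * arctan (x/R)| ≤ 2*S/η^2 := by
    intro x
    rw [abs_mul, abs_of_nonneg hs0]
    have h1 : s * |arctan (x/R)| ≤ s * 2 :=
      mul_le_mul_of_nonneg_left (arct x) hs0
    have h2 : s * 2 = 2*S/η^2 := by rw [hs]; ring
    linarith
  have bndA : ∀ x, |s * arctan (x/R)| ≤ (2*S + R + 4) / η^2 := by
    intro x
    have h3 : 2*S/η^2 ≤ (2*S + R + 4)/η^2 := by gcongr; linarith
    linarith [bndA2 x]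
  have bndh : ∀ x, |(2*x^3 - 2*E*x) / ((x^2 - E)^2 + η^2)| ≤ (R + 4) / η^2 :=
    fun x => h1_bound E η R x hη hη1 hR
  have bndB : ∀ x, |(2*x^3 - 2*E*x) / ((x^2 - E)^2 + η^2) - s * arctan (x/R)|
      ≤ (2*S + R + 4) / η^2 := by
    intro x
    have h1 := abs_sub ((2*x^3 - 2*E*x) / ((x^2 - E)^2 + η^2)) (s * arctan (x/R))
    have h2 := bndh x
    have h3 := bndA2 x
    have h4 : (R + 4)/η^2 + 2*S/η^2 = (2*S + R + 4)/η^2 := by ring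
    linarith
  -- Lipschitz
  have LA : LipschitzWith (Real.toNNReal ((2*S + R + 4) / η^2)) A :=
    lipschitz_of_deriv_bound' dA bndA
  have LB : LipschitzWith (Real.toNNReal ((2*S + R + 4) / η^2)) B :=
    lipschitz_of_deriv_bound' dB bndB
  have LcA : LipschitzWith (Real.toNNReal ((2*S + R + 4) / η^2)) (fun x => c - A x) := by
    refine lipschitz_of_deriv_bound' (f' := fun x => 0 - s * arctan (x/R))
      (fun x => (hasDerivAt_const x c).sub (dA x)) fun x => ?_
    simpa using bndA x
  have Lmin : LipschitzWith (Real.toNNReal ((2*S + R + 4) / η^2))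
      (fun x => min (B x) (c - A x)) := by
    simpa [max_self] using LB.min LcA
  have L0 : LipschitzWith (Real.toNNReal ((2*S + R + 4) / η^2)) (fun _ : ℝ => (0:ℝ)) :=
    (LipschitzWith.const 0).weaken (zero_le)
  -- convexity of A
  have derivA : deriv A = fun x => s * arctan (x/R) := funext fun x => (dA x).deriv
  have convA : ConvexOn ℝ Set.univ A := by
    apply convexOn_univ_of_deriv2_nonneg (fun x => (dA x).differentiableAt)
    · rw [derivA]; exact fun x => (dA1 x).differentiableAt
    · intro x
      simp only [Function.iterate_succ, Function.iterate_zero, Function.comp_apply, id_eq]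
      rw [derivA, (dA1 x).deriv]
      positivity
  -- concavity of B
  have derivB : deriv B = fun x => (2*x^3 - 2*E*x) / ((x^2 - E)^2 + η^2) - s * arctan (x/R) :=
    funext fun x => (dB x).deriv
  have concB : ConcaveOn ℝ Set.univ B := by
    apply concaveOn_univ_of_deriv2_nonpos (fun x => (dB x).differentiableAt)
    · rw [derivB]; exact fun x => ((dh1 x).sub (dA1 x)).differentiableAt
    · intro x
      simp only [Function.iterate_succ, Function.iterate_zero, Function.comp_apply, id_eq]
      rw [derivB, (show HasDerivAt (fun x => (2*x^3 - 2*E*x) / ((x^2 - E)^2 + η^2) - s * arctan (x/R)) _ x from (dh1 x).sub (dA1 x)).deriv]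
      have := core_ineq E η R x hη hη1 hR
      have hsr : s * R / (x^2 + R^2) = ((8*R^3 + 2*R + 40) / η^2) * R / (x^2 + R^2) := by
        rw [hs, hS]
      rw [hsr]
      linarith
  have concCA : ConcaveOn ℝ Set.univ (fun x => c - A x) := by
    have h1 : (fun x => c - A x) = (fun x : ℝ => c) + fun x => -A x := by
      funext x; simp [sub_eq_add_neg]
    rw [h1]
    exact (concaveOn_const c convex_univ).add convA.neg
  have concMin : ConcaveOn ℝ Set.univ (fun x => min (B x) (c - A x)) := concB.inf concCA
  have convZ : ConvexOn ℝ Set.univ (fun _ : ℝ => (0:ℝ)) := convexOn_const 0 convex_univ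
  refine ⟨![A, fun x => min (B x) (c - A x), fun _ => 0, fun _ => 0, fun _ => 0], ?_, ?_, ?_⟩
  · intro i; fin_cases i <;> simpa using (by assumption : _)
  · intro i; fin_cases i
    · exact Or.inl convA
    · exact Or.inr concMin
    · exact Or.inl convZ
    · exact Or.inl convZ
    · exact Or.inl convZ
  · intro x
    have hmin : min (B x) (c - A x) = min (h x) c - A x := by
      rw [hB]; exact min_sub_sub_right (h x) c (A x)
    have hlog : logEtaK η K (x^2 - E) = min (h x) c := by
      rw [logEtaK, hc, logEta, hh]
    rw [Fin.sum_univ_five]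
    simp only [Matrix.cons_val_zero, Matrix.cons_val_one, Matrix.head_cons,
      Matrix.cons_val_two, Matrix.tail_cons, Matrix.cons_val_three, Matrix.cons_val_four]
    rw [hlog, hmin]
    ring
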